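/- arXiv:1004.3655 — 4 statements merged into one kernel-verified Lean document; each statement's English description precedes it below -/
import Mathlib

section
/- Let A be a set, (ℬ_i)_{i∈I} a family of finiteness spaces, and (f_i)_{i∈I} a family of relations f_i ⊆ A × |ℬ_i| such that f_i[{α}] ∈ F(ℬ_i) for all α ∈ A and all i ∈ I. Then 𝔗((ℬ_i),(f_i)) := {a ⊆ A : ∀ i ∈ I, f_i[a] ∈ F(ℬ_i)} is a finiteness structure on A, and moreover 𝔗((ℬ_i),(f_i)) = ({⋂_{i∈I}(f_i ÷ b_i) : ∀i, b_i ∈ F(ℬ_i)})^⊥⊥. -/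
/-!
A set `a ⊆ A` whose images `fᵢ[a]` are all finitary is contained in the division
`⋂ᵢ (fᵢ ÷ fᵢ[a])`, hence lies in the bidual of the divisions. Conversely, if some `fᵢ[a]`
met an antifinitary `b'` in an infinite set, choosing one preimage in `a` of each point of
`fᵢ[a] ∩ b'` would give an infinite `a' ⊆ a` (the images `fᵢ[{x}]` being finitary, each point
is chosen only finitely often) that meets every division in a finite set, so `a` would not
lie in the bidual. Since a bidual is its own bidual, the transported family is a finiteness
structure.
-/

open Set

namespace FinitenessPaper

def predual {α : Type*} (A : Set α) (F : Set (Set α)) : Set (Set α) :=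
  {a' | a' ⊆ A ∧ ∀ a ∈ F, (a ∩ a').Finite}

structure FinSpace (α : Type*) where
  web : Set α
  fin : Set (Set α)
  isFin : predual web (predual web fin) = fin

def rimage {α β : Type*} (f : Set (α × β)) (a : Set α) : Set β := {y | ∃ x ∈ a, (x, y) ∈ f}

section Predual

variable {α : Type*} (A : Set α)

lemma predual_anti {F G : Set (Set α)} (h : F ⊆ G) : predual A G ⊆ predual A F :=
  fun _ ha' => ⟨ha'.1, fun a ha => ha'.2 a (h ha)⟩

lemma subset_predual_predual {F : Set (Set α)} (hF : ∀ s ∈ F, s ⊆ A) :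
    F ⊆ predual A (predual A F) :=
  fun a ha => ⟨hF a ha, fun a' ha' => by rw [inter_comm]; exact ha'.2 a ha⟩

lemma predual_predual_predual {F : Set (Set α)} (hF : ∀ s ∈ F, s ⊆ A) :
    predual A (predual A (predual A F)) = predual A F :=
  (predual_anti A (subset_predual_predual A hF)).antisymm
    (subset_predual_predual A fun _ hs => hs.1)

lemma mem_predual_predual_of_subset {F : Set (Set α)} {s d : Set α} (hsA : s ⊆ A)
    (hd : d ∈ F) (hsd : s ⊆ d) : s ∈ predual A (predual A F) :=
  ⟨hsA, fun _ ha' => by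
    rw [inter_comm]
    exact (ha'.2 d hd).subset (inter_subset_inter_left _ hsd)⟩

end Predual

namespace FinSpace

variable {β : Type*} (B : FinSpace β)

lemma subset_web {s : Set β} (hs : s ∈ B.fin) : s ⊆ B.web := by
  rw [← B.isFin] at hs
  exact hs.1

lemma mem_fin_of_forall_finite_inter {s : Set β} (hs : s ⊆ B.web)
    (h : ∀ b' ∈ predual B.web B.fin, (b' ∩ s).Finite) : s ∈ B.fin := by
  rw [← B.isFin]
  exact ⟨hs, h⟩

end FinSpace

lemma exists_infinite_subset_finite_inter_division {α β : Type*} {f : Set (α × β)}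
    {a : Set α} {b' : Set β} (hfib : ∀ x ∈ a, (rimage f {x} ∩ b').Finite)
    (hinf : (b' ∩ rimage f a).Infinite) :
    ∃ a' ⊆ a, a'.Infinite ∧
      ∀ b, (b ∩ b').Finite → (a' ∩ {x | ∀ y, (x, y) ∈ f → y ∈ b}).Finite := by
  set T := b' ∩ rimage f a
  choose w hwa hwf using fun y : T => y.2.2
  refine ⟨range w, range_subset_iff.2 hwa, fun hfin => hinf ?_, fun b hb => ?_⟩
  · have hfibers : ∀ x ∈ range w, (w ⁻¹' {x}).Finite := by
      rintro x ⟨y, rfl⟩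
      refine ((hfib _ (hwa y)).preimage Subtype.val_injective.injOn).subset ?_
      rintro z hz
      exact ⟨⟨w y, rfl, hz ▸ hwf z⟩, z.2.1⟩
    have hT : (univ : Set T).Finite := by
      simpa using hfin.preimage' hfibers
    exact finite_coe_iff.1 (finite_univ_iff.1 hT)
  · refine ((hb.preimage Subtype.val_injective.injOn).image w).subset ?_
    rintro _ ⟨⟨y, rfl⟩, hdiv⟩
    exact ⟨y, ⟨hdiv _ (hwf y), y.2.1⟩, rfl⟩

section Transport

variable {α β I : Type*} (A : Set α) (B : I → FinSpace β) (f : I → Set (α × β))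

/-- The paper's `𝔗((ℬᵢ), (fᵢ))`. -/
def transport : Set (Set α) := {a | a ⊆ A ∧ ∀ i, rimage (f i) a ∈ (B i).fin}

/-- `⋂ᵢ (fᵢ ÷ bᵢ)`, relative to `A`. -/
def divisionFamily (b : I → Set β) : Set α := {x ∈ A | ∀ i, ∀ y, (x, y) ∈ f i → y ∈ b i}

def divisions : Set (Set α) :=
  {d | ∃ b : I → Set β, (∀ i, b i ∈ (B i).fin) ∧ d = divisionFamily A f b}

lemma transport_subset_predual_predual_divisions :
    transport A B f ⊆ predual A (predual A (divisions A B f)) := by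
  rintro a ⟨haA, hfin⟩
  refine mem_predual_predual_of_subset A haA ⟨fun i => rimage (f i) a, hfin, rfl⟩ ?_
  exact fun x hx => ⟨haA hx, fun i y hy => ⟨x, hx, hy⟩⟩

lemma predual_predual_divisions_subset_transport
    (hf : ∀ x ∈ A, ∀ i, rimage (f i) {x} ∈ (B i).fin) :
    predual A (predual A (divisions A B f)) ⊆ transport A B f := by
  rintro a ⟨haA, hbid⟩
  refine ⟨haA, fun i => (B i).mem_fin_of_forall_finite_inter ?_ fun b' hb' => ?_⟩
  · rintro y ⟨x, hx, hxy⟩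
    exact (B i).subset_web (hf x (haA hx) i) ⟨x, rfl, hxy⟩
  · by_contra hinf
    obtain ⟨a', ha'a, ha'inf, ha'div⟩ := exists_infinite_subset_finite_inter_division
      (fun x hx => hb'.2 _ (hf x (haA hx) i)) hinf
    have ha' : a' ∈ predual A (divisions A B f) := by
      refine ⟨ha'a.trans haA, ?_⟩
      rintro _ ⟨b, hb, rfl⟩
      rw [inter_comm]
      exact (ha'div (b i) (hb'.2 _ (hb i))).subset
        (inter_subset_inter_right _ fun x hx => hx.2 i)
    exact ha'inf ((hbid a' ha').subset (subset_inter Subset.rfl ha'a))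

lemma transport_eq_predual_predual_divisions
    (hf : ∀ x ∈ A, ∀ i, rimage (f i) {x} ∈ (B i).fin) :
    transport A B f = predual A (predual A (divisions A B f)) :=
  (transport_subset_predual_predual_divisions A B f).antisymm
    (predual_predual_divisions_subset_transport A B f hf)

end Transport

theorem transport_family_general {α β : Type*} {I : Type*} (A : Set α)
    (B : I → FinSpace β) (f : I → Set (α × β))
    (hf : ∀ x ∈ A, ∀ i, rimage (f i) {x} ∈ (B i).fin) :
    predual A (predual A {a | a ⊆ A ∧ ∀ i, rimage (f i) a ∈ (B i).fin})
        = {a | a ⊆ A ∧ ∀ i, rimage (f i) a ∈ (B i).fin} ∧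
    {a | a ⊆ A ∧ ∀ i, rimage (f i) a ∈ (B i).fin}
        = predual A (predual A
            {d | ∃ b : I → Set β, (∀ i, b i ∈ (B i).fin) ∧
              d = {x ∈ A | ∀ i, ∀ y, (x, y) ∈ f i → y ∈ b i}}) := by
  have h := transport_eq_predual_predual_divisions A B f hf
  refine ⟨?_, h⟩
  change predual A (predual A (transport A B f)) = transport A B f
  rw [h, predual_predual_predual A fun _ hs => hs.1]

/-- Transport lemma, family version: if each `f i ⊆ A × |ℬᵢ|` maps every element
of `A` to a finitary subset of `ℬᵢ`, then `{a ⊆ A : ∀ i, fᵢ[a] ∈ F(ℬᵢ)}` is a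
finiteness structure on `A`, equal to the bidual of the set of divisions
`⋂ᵢ (fᵢ ÷ bᵢ)` (relative to `A`) for families `bᵢ ∈ F(ℬᵢ)`. -/
theorem transport_family {α β : Type*} {I : Type*} (A : Set α)
    (B : I → FinSpace β) (f : I → Set (α × β))
    (hf_sub : ∀ i, f i ⊆ A ×ˢ (B i).web)
    (hf : ∀ x ∈ A, ∀ i, rimage (f i) {x} ∈ (B i).fin) :
    predual A (predual A {a | a ⊆ A ∧ ∀ i, rimage (f i) a ∈ (B i).fin})
        = {a | a ⊆ A ∧ ∀ i, rimage (f i) a ∈ (B i).fin} ∧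
    {a | a ⊆ A ∧ ∀ i, rimage (f i) a ∈ (B i).fin}
        = predual A (predual A
            {d | ∃ b : I → Set β, (∀ i, b i ∈ (B i).fin) ∧
              d = {x ∈ A | ∀ i, ∀ y, (x, y) ∈ f i → y ∈ b i}}) :=
  transport_family_general A B f hf

end FinitenessPaper
end

section
/- Let 𝒜 and ℬ be finiteness spaces and f ⊆ |𝒜| × |ℬ| a relation. The following are equivalent: (a) f is finitary from 𝒜 to ℬ; (b) the reverse relation f⁻¹ is finitary from ℬ^⊥ to 𝒜^⊥; (c) for all a ∈ F(𝒜), f[a] ∈ F(ℬ), and for all β ∈ |ℬ|, f⁻¹[{β}] ∈ F(𝒜^⊥); (d) f ∈ F(𝒜 ⊸ ℬ). -/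
/-! (a) ⇔ (b) is a symmetry of the definition once `𝔉^⊥⊥ = 𝔉`. For (a) ⇒ (d), if
`c ∈ F(𝒜 ⊗ ℬ^⊥)` then `c ∩ f` lies in the product of `π₁[c] ∩ f⁻¹[π₂[c]]` and
`f[π₁[c]] ∩ π₂[c]`, both finite. For (d) ⇒ (c), `(a × b') ∩ f` is finite whenever `a` is
finitary and `b'` antifinitary, and its projections cover `f[a] ∩ b'` and `a ∩ f⁻¹[b']`;
take `b' = {β}` for the fibres. For (c) ⇒ (a), `a ∩ f⁻¹[b']` is the finite union of the
finite sets `a ∩ f⁻¹[{β}]`, `β ∈ f[a] ∩ b'`. -/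

open Set

namespace FinitenessPaper

/-- Reverse relation. -/
def rrev {α β : Type*} (f : Set (α × β)) : Set (β × α) := {p | (p.2, p.1) ∈ f}

/-- A relation is finitary between two (webs with) finiteness structures:
direct images of finitary sets are finitary, and reverse images of antifinitary
sets are antifinitary. -/
def FinitaryRel {α β : Type*} (Aw : Set α) (AF : Set (Set α)) (Bw : Set β)
    (BF : Set (Set β)) (f : Set (α × β)) : Prop :=
  (∀ a ∈ AF, rimage f a ∈ BF) ∧
  ∀ b' ∈ predual Bw BF, rimage (rrev f) b' ∈ predual Aw AF

/-- The finiteness structure of the tensor product `𝒜 ⊗ ℬ` (given by webs and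
structures): subsets of the product web whose two projections are finitary. -/
def tensFin {α β : Type*} (Wa : Set α) (Fa : Set (Set α)) (Wb : Set β)
    (Fb : Set (Set β)) : Set (Set (α × β)) :=
  {c | c ⊆ Wa ×ˢ Wb ∧ Prod.fst '' c ∈ Fa ∧ Prod.snd '' c ∈ Fb}

section

variable {α β : Type*}

lemma mem_predual_of_subset {W : Set α} {F : Set (Set α)} {a a' : Set α}
    (ha : a ∈ predual W F) (hs : a' ⊆ a) : a' ∈ predual W F :=
  ⟨hs.trans ha.1, fun b hb => (ha.2 b hb).subset (inter_subset_inter_right _ hs)⟩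

lemma singleton_mem_predual {W : Set α} {F : Set (Set α)} {x : α} (hx : x ∈ W) :
    ({x} : Set α) ∈ predual W F :=
  ⟨singleton_subset_iff.2 hx, fun a _ => (finite_singleton x).inter_of_right a⟩

lemma rimage_subset_biUnion (f : Set (α × β)) (s : Set α) :
    rimage f s ⊆ ⋃ x ∈ s, rimage f {x} := by
  rintro y ⟨x, hx, hxy⟩
  exact mem_biUnion hx ⟨x, rfl, hxy⟩

lemma inter_subset_prod_inter_rimage (f c : Set (α × β)) :
    c ∩ f ⊆ (Prod.fst '' c ∩ rimage (rrev f) (Prod.snd '' c)) ×ˢ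
      (rimage f (Prod.fst '' c) ∩ Prod.snd '' c) := by
  rintro ⟨x, y⟩ ⟨hc, hf⟩
  exact ⟨⟨⟨_, hc, rfl⟩, y, ⟨_, hc, rfl⟩, hf⟩, ⟨x, ⟨_, hc, rfl⟩, hf⟩, ⟨_, hc, rfl⟩⟩

lemma rimage_inter_subset_image_snd (f : Set (α × β)) (a : Set α) (b : Set β) :
    rimage f a ∩ b ⊆ Prod.snd '' (a ×ˢ b ∩ f) := by
  rintro y ⟨⟨x, hx, hxy⟩, hy⟩
  exact ⟨(x, y), ⟨⟨hx, hy⟩, hxy⟩, rfl⟩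

lemma inter_rimage_rrev_subset_image_fst (f : Set (α × β)) (a : Set α) (b : Set β) :
    a ∩ rimage (rrev f) b ⊆ Prod.fst '' (a ×ˢ b ∩ f) := by
  rintro x ⟨hx, y, hy, hxy⟩
  exact ⟨(x, y), ⟨⟨hx, hy⟩, hxy⟩, rfl⟩

/-- `F(𝒜 ⊸ ℬ) = F((𝒜 ⊗ ℬ^⊥)^⊥)`. -/
def linFin (A : FinSpace α) (B : FinSpace β) : Set (Set (α × β)) :=
  predual (A.web ×ˢ B.web) (tensFin A.web A.fin B.web (predual B.web B.fin))

namespace FinSpace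

variable (A : FinSpace α)

lemma mem_fin_iff {a : Set α} :
    a ∈ A.fin ↔ a ⊆ A.web ∧ ∀ a' ∈ predual A.web A.fin, (a' ∩ a).Finite := by
  conv_lhs => rw [← A.isFin]
  rfl

lemma mem_fin_of_subset {a a' : Set α} (ha : a ∈ A.fin) (hs : a' ⊆ a) : a' ∈ A.fin := by
  rw [← A.isFin] at ha ⊢
  exact mem_predual_of_subset ha hs

end FinSpace

lemma finitaryRel_iff_rrev (A : FinSpace α) (B : FinSpace β) (f : Set (α × β)) :
    FinitaryRel A.web A.fin B.web B.fin f ↔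
      FinitaryRel B.web (predual B.web B.fin) A.web (predual A.web A.fin) (rrev f) := by
  unfold FinitaryRel
  rw [A.isFin, B.isFin]
  exact and_comm

lemma FinitaryRel.mem_linFin {A : FinSpace α} {B : FinSpace β} {f : Set (α × β)}
    (hf : f ⊆ A.web ×ˢ B.web) (h : FinitaryRel A.web A.fin B.web B.fin f) :
    f ∈ linFin A B := by
  refine ⟨hf, fun c ⟨_, hc₁, hc₂⟩ => ?_⟩
  have hfin₁ := (h.2 _ hc₂).2 _ hc₁
  have hfin₂ := hc₂.2 _ (h.1 _ hc₁)
  exact (hfin₁.prod hfin₂).subset (inter_subset_prod_inter_rimage f c)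

section linFin

variable {A : FinSpace α} {B : FinSpace β} {f : Set (α × β)}

lemma finite_prod_inter_of_mem_linFin (hf : f ∈ linFin A B) {a : Set α} {b' : Set β}
    (ha : a ∈ A.fin) (hb' : b' ∈ predual B.web B.fin) : (a ×ˢ b' ∩ f).Finite := by
  have hc : a ×ˢ b' ∩ f ∈ tensFin A.web A.fin B.web (predual B.web B.fin) :=
    ⟨inter_subset_right.trans hf.1,
      A.mem_fin_of_subset ha (by rintro _ ⟨_, hp, rfl⟩; exact hp.1.1),
      mem_predual_of_subset hb' (by rintro _ ⟨_, hp, rfl⟩; exact hp.1.2)⟩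
  simpa only [inter_assoc, inter_self] using hf.2 _ hc

lemma rimage_mem_fin_of_mem_linFin (hf : f ∈ linFin A B) {a : Set α} (ha : a ∈ A.fin) :
    rimage f a ∈ B.fin := by
  refine B.mem_fin_iff.2 ⟨fun y ⟨_, _, hxy⟩ => (hf.1 hxy).2, fun b' hb' => ?_⟩
  rw [inter_comm]
  exact ((finite_prod_inter_of_mem_linFin hf ha hb').image _).subset
    (rimage_inter_subset_image_snd f a b')

lemma rimage_rrev_singleton_mem_predual_of_mem_linFin (hf : f ∈ linFin A B) {b : β}
    (hb : b ∈ B.web) :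
    rimage (rrev f) {b} ∈ predual A.web A.fin :=
  ⟨fun _ ⟨_, _, hxy⟩ => (hf.1 hxy).1, fun a ha =>
    ((finite_prod_inter_of_mem_linFin hf ha (singleton_mem_predual hb)).image _).subset
      (inter_rimage_rrev_subset_image_fst f a {b})⟩

end linFin

lemma rimage_rrev_mem_predual {A : FinSpace α} {B : FinSpace β} {f : Set (α × β)}
    (himage : ∀ a ∈ A.fin, rimage f a ∈ B.fin)
    (hfibre : ∀ b ∈ B.web, rimage (rrev f) {b} ∈ predual A.web A.fin)
    {b' : Set β} (hb' : b' ∈ predual B.web B.fin) :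
    rimage (rrev f) b' ∈ predual A.web A.fin := by
  refine ⟨(rimage_subset_biUnion _ b').trans
    (iUnion₂_subset fun y hy => (hfibre y (hb'.1 hy)).1), fun a ha => ?_⟩
  have hsub : a ∩ rimage (rrev f) b' ⊆ ⋃ y ∈ rimage f a ∩ b', a ∩ rimage (rrev f) {y} := by
    rintro x ⟨hxa, y, hyb, hxy⟩
    exact mem_biUnion ⟨⟨x, hxa, hxy⟩, hyb⟩ ⟨hxa, y, rfl, hxy⟩
  refine (Finite.biUnion (hb'.2 _ (himage a ha)) fun y hy => ?_).subset hsub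
  exact (hfibre y (hb'.1 hy.2)).2 a ha

end

/-- Characterization of finitary relations: `f` is finitary from `𝒜` to `ℬ` iff
`f⁻¹` is finitary from `ℬ^⊥` to `𝒜^⊥`, iff direct images of finitary sets are
finitary and `f⁻¹[{β}]` is antifinitary for every `β ∈ |ℬ|`, iff
`f ∈ F(𝒜 ⊸ ℬ) = F((𝒜 ⊗ ℬ^⊥)^⊥)`. -/
theorem finitaryRel_characterization {α β : Type*} (A : FinSpace α) (B : FinSpace β)
    (f : Set (α × β)) (hf : f ⊆ A.web ×ˢ B.web) :
    (FinitaryRel A.web A.fin B.web B.fin f ↔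
      FinitaryRel B.web (predual B.web B.fin) A.web (predual A.web A.fin) (rrev f)) ∧
    (FinitaryRel A.web A.fin B.web B.fin f ↔
      ((∀ a ∈ A.fin, rimage f a ∈ B.fin) ∧
        ∀ b ∈ B.web, rimage (rrev f) {b} ∈ predual A.web A.fin)) ∧
    (FinitaryRel A.web A.fin B.web B.fin f ↔
      f ∈ predual (A.web ×ˢ B.web)
        (tensFin A.web A.fin B.web (predual B.web B.fin))) := by
  have had : FinitaryRel A.web A.fin B.web B.fin f → f ∈ linFin A B :=
    FinitaryRel.mem_linFin hf
  have hdc (h : f ∈ linFin A B) : (∀ a ∈ A.fin, rimage f a ∈ B.fin) ∧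
      ∀ b ∈ B.web, rimage (rrev f) {b} ∈ predual A.web A.fin :=
    ⟨fun _ ha => rimage_mem_fin_of_mem_linFin h ha,
      fun _ hb => rimage_rrev_singleton_mem_predual_of_mem_linFin h hb⟩
  have hca : ((∀ a ∈ A.fin, rimage f a ∈ B.fin) ∧
      ∀ b ∈ B.web, rimage (rrev f) {b} ∈ predual A.web A.fin) →
      FinitaryRel A.web A.fin B.web B.fin f :=
    fun ⟨himage, hfibre⟩ => ⟨himage, fun _ hb' => rimage_rrev_mem_predual himage hfibre hb'⟩
  exact ⟨finitaryRel_iff_rrev A B f, ⟨fun h => hdc (had h), hca⟩, ⟨had, fun h => hca (hdc h)⟩⟩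

end FinitenessPaper
end

section
/- (Transport situation with shape yields a transport functor) Let T be a symmetric I-ary functor in Rel, (own_i)_{i∈I} an ownership relation on T, and shp a shape relation on (T, (own_i)). Then for all families (𝒜_i), (ℬ_i) of finiteness spaces and every family (f_i) with each f_i finitary from 𝒜_i to ℬ_i, the relation T((f_i)) is finitary from (T(|𝒜_i|)_i, 𝔗((𝒜_i),(own_i))) to (T(|ℬ_i|)_i, 𝔗((ℬ_i),(own_i))), where 𝔗((𝒜_i),(own_i)) = {â ⊆ T((|𝒜_i|)_i) : ∀i ∈ I, own_i[â] ∈ F(𝒜_i)}. -/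
/-!
Forward direction: lax naturality of `own_i` gives `own_i[T(f)[a]] ⊆ f_i[own_i[a]]`.
Backward direction: for `b'` in the dual of the target and `a` in the source structure, the
set `t = a ∩ T(f)⁻¹[b']` lies over the finite set `c = T(f)[a] ∩ b'`. By symmetry
`T(f)⁻¹ = T(f⁻¹)`, so lax naturality applies to `T(f)⁻¹` as well: the shapes of `t` are among
the finitely many shapes of `c`, and `own_i[t] ⊆ own_i[a] ∩ f_i⁻¹[own_i[c]]`, which is finite
because the finite set `own_i[c]` lies in the dual of `ℬ_i`. The shape axiom makes `t` finite.
-/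

open Set

namespace FinitenessPaper

/-- Composition of relations. -/
def rcomp {α β γ : Type*} (g : Set (β × γ)) (f : Set (α × β)) : Set (α × γ) :=
  {p | ∃ b, (p.1, b) ∈ f ∧ (b, p.2) ∈ g}

/-- Identity relation on a set. -/
def rid {α : Type*} (A : Set α) : Set (α × α) := {p | p.1 ∈ A ∧ p.1 = p.2}

section

variable {α β σ I : Type*}

lemma FinSpace.mem_fin_of_subset_s12 (X : FinSpace α) {a b : Set α} (hab : a ⊆ b)
    (hb : b ∈ X.fin) : a ∈ X.fin := by
  rw [← X.isFin] at hb ⊢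
  exact ⟨hab.trans hb.1, fun c hc => (hb.2 c hc).subset (inter_subset_inter_right c hab)⟩

lemma mem_predual_of_finite {A d : Set α} (F : Set (Set α)) (hdA : d ⊆ A) (hd : d.Finite) :
    d ∈ predual A F :=
  ⟨hdA, fun _ _ => hd.subset inter_subset_right⟩

lemma rimage_mono {r : Set (α × β)} {a b : Set α} (hab : a ⊆ b) : rimage r a ⊆ rimage r b :=
  fun _ ⟨x, hx, hxy⟩ => ⟨x, hab hx, hxy⟩

lemma rimage_subset_of_subset_prod {r : Set (α × β)} {A : Set α} {B : Set β}
    (hr : r ⊆ A ×ˢ B) (a : Set α) : rimage r a ⊆ B :=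
  fun _ ⟨_, _, hxy⟩ => (hr hxy).2

lemma rrev_subset_prod {r : Set (α × β)} {A : Set α} {B : Set β} (hr : r ⊆ A ×ˢ B) :
    rrev r ⊆ B ×ˢ A :=
  fun _ h => ⟨(hr h).2, (hr h).1⟩

lemma rimage_rid_subset (S a : Set α) : rimage (rid S) a ⊆ a := by
  rintro y ⟨x, hx, -, hxy⟩
  rwa [← show x = y from hxy]

lemma rimage_rimage_subset_of_rcomp_subset {γ δ : Type*} {g : Set (β × γ)} {f : Set (α × β)}
    {g' : Set (δ × γ)} {f' : Set (α × δ)} (h : rcomp g f ⊆ rcomp g' f') (a : Set α) :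
    rimage g (rimage f a) ⊆ rimage g' (rimage f' a) := by
  rintro z ⟨y, ⟨x, hx, hxy⟩, hyz⟩
  obtain ⟨w, hxw, hwz⟩ := h (show (x, z) ∈ rcomp g f from ⟨y, hxy, hyz⟩)
  exact ⟨w, ⟨x, hx, hxw⟩, hwz⟩

lemma inter_rimage_rrev_subset (r : Set (α × β)) (a : Set α) (b : Set β) :
    a ∩ rimage (rrev r) b ⊆ rimage (rrev r) (rimage r a ∩ b) := by
  rintro x ⟨hx, y, hy, hxy⟩
  exact ⟨y, ⟨⟨x, hx, hxy⟩, hy⟩, hxy⟩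

lemma finite_rimage {r : Set (α × β)} (hr : ∀ x, (rimage r {x}).Finite) {a : Set α}
    (ha : a.Finite) : (rimage r a).Finite :=
  (ha.biUnion fun x _ => hr x).subset fun _ ⟨x, hx, hxy⟩ => mem_biUnion hx ⟨x, rfl, hxy⟩

/-- The finiteness structure `𝔗` transported along the ownership relations `own i`. -/
def ownedFin (X : Set β) (own : I → Set (β × α)) (𝒜 : I → FinSpace α) : Set (Set β) :=
  {s | s ⊆ X ∧ ∀ i, rimage (own i) s ∈ (𝒜 i).fin}

lemma rimage_mem_ownedFin {X Y : Set β} {ownX ownY : I → Set (β × α)}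
    {𝒜 ℬ : I → FinSpace α} {F : Set (β × β)} {f : I → Set (α × α)} (hF : F ⊆ X ×ˢ Y)
    (hlax : ∀ i, rcomp (ownY i) F ⊆ rcomp (f i) (ownX i))
    (hf : ∀ i, ∀ a ∈ (𝒜 i).fin, rimage (f i) a ∈ (ℬ i).fin)
    {s : Set β} (hs : s ∈ ownedFin X ownX 𝒜) : rimage F s ∈ ownedFin Y ownY ℬ :=
  ⟨rimage_subset_of_subset_prod hF s, fun i =>
    (ℬ i).mem_fin_of_subset_s12 (rimage_rimage_subset_of_rcomp_subset (hlax i) s)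
      (hf i _ (hs.2 i))⟩

lemma rimage_rrev_mem_predual_ownedFin {X Y : Set β} {ownX ownY : I → Set (β × α)}
    {S : Set σ} {shpX shpY : Set (β × σ)} {𝒜 ℬ : I → FinSpace α}
    {F : Set (β × β)} {f : I → Set (α × α)} (hF : F ⊆ X ×ˢ Y)
    (hownY_sub : ∀ i, ownY i ⊆ Y ×ˢ (ℬ i).web)
    (hownY_qf : ∀ i x, (rimage (ownY i) {x}).Finite)
    (hshpY_qf : ∀ x, (rimage shpY {x}).Finite)
    (hlax : ∀ i, rcomp (ownY i) F ⊆ rcomp (f i) (ownX i))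
    (hlax_rev : ∀ i, rcomp (ownX i) (rrev F) ⊆ rcomp (rrev (f i)) (ownY i))
    (hshp_lax_rev : rcomp shpX (rrev F) ⊆ rcomp (rid S) shpY)
    (hshpX_fin : ∀ s ⊆ X, (rimage shpX s).Finite →
      (∀ i, (rimage (ownX i) s).Finite) → s.Finite)
    (hf : ∀ i, FinitaryRel (𝒜 i).web (𝒜 i).fin (ℬ i).web (ℬ i).fin (f i))
    {b' : Set β} (hb' : b' ∈ predual Y (ownedFin Y ownY ℬ)) :
    rimage (rrev F) b' ∈ predual X (ownedFin X ownX 𝒜) := by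
  refine ⟨rimage_subset_of_subset_prod (rrev_subset_prod hF) b', fun s hs => ?_⟩
  set c := rimage F s ∩ b'
  have hc : c.Finite := hb'.2 _ (rimage_mem_ownedFin hF hlax (fun i => (hf i).1) hs)
  have ht : s ∩ rimage (rrev F) b' ⊆ rimage (rrev F) c := inter_rimage_rrev_subset F s b'
  refine hshpX_fin _ (inter_subset_left.trans hs.1) ?_ fun i => ?_
  · refine (finite_rimage hshpY_qf hc).subset ?_
    calc rimage shpX (s ∩ rimage (rrev F) b')
        ⊆ rimage shpX (rimage (rrev F) c) := rimage_mono ht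
      _ ⊆ rimage (rid S) (rimage shpY c) := rimage_rimage_subset_of_rcomp_subset hshp_lax_rev c
      _ ⊆ rimage shpY c := rimage_rid_subset S _
  · set d := rimage (ownY i) c
    have hd : d ∈ predual (ℬ i).web (ℬ i).fin :=
      mem_predual_of_finite _ (rimage_subset_of_subset_prod (hownY_sub i) c)
        (finite_rimage (hownY_qf i) hc)
    have hown : rimage (ownX i) (s ∩ rimage (rrev F) b') ⊆
        rimage (ownX i) s ∩ rimage (rrev (f i)) d :=
      subset_inter (rimage_mono inter_subset_left)
        ((rimage_mono ht).trans (rimage_rimage_subset_of_rcomp_subset (hlax_rev i) c))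
    exact (((hf i).2 d hd).2 _ (hs.2 i)).subset hown

end

theorem transport_situation_transport_functor_general
    {α β σ : Type*} {I : Type*}
    (Tobj : (I → Set α) → Set β)
    (Tmap : (I → Set (α × α)) → Set (β × β))
    (hT_sub : ∀ (A B : I → Set α) (f : I → Set (α × α)),
      (∀ i, f i ⊆ A i ×ˢ B i) → Tmap f ⊆ Tobj A ×ˢ Tobj B)
    (hT_sym : ∀ f : I → Set (α × α), Tmap (fun i => rrev (f i)) = rrev (Tmap f))
    (own : I → (I → Set α) → Set (β × α))
    (hown_sub : ∀ i (A : I → Set α), own i A ⊆ Tobj A ×ˢ A i)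
    (hown_qf : ∀ i (A : I → Set α) (x : β), (rimage (own i A) {x}).Finite)
    (hown_lax : ∀ i (A B : I → Set α) (g : I → Set (α × α)),
      (∀ j, g j ⊆ A j ×ˢ B j) →
      rcomp (own i B) (Tmap g) ⊆ rcomp (g i) (own i A))
    (S : Set σ)
    (shp : (I → Set α) → Set (β × σ))
    (hshp_qf : ∀ (A : I → Set α) (x : β), (rimage (shp A) {x}).Finite)
    (hshp_lax : ∀ (A B : I → Set α) (g : I → Set (α × α)),
      (∀ j, g j ⊆ A j ×ˢ B j) →
      rcomp (shp B) (Tmap g) ⊆ rcomp (rid S) (shp A))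
    (hshp_fin : ∀ (A : I → Set α) (s : Set β), s ⊆ Tobj A →
      (rimage (shp A) s).Finite → (∀ i, (rimage (own i A) s).Finite) → s.Finite)
    (𝒜 ℬ : I → FinSpace α) (f : I → Set (α × α))
    (hf_sub : ∀ i, f i ⊆ (𝒜 i).web ×ˢ (ℬ i).web)
    (hf : ∀ i, FinitaryRel (𝒜 i).web (𝒜 i).fin (ℬ i).web (ℬ i).fin (f i)) :
    FinitaryRel (Tobj fun i => (𝒜 i).web)
      {s | s ⊆ (Tobj fun i => (𝒜 i).web) ∧
        ∀ i, rimage (own i fun j => (𝒜 j).web) s ∈ (𝒜 i).fin}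
      (Tobj fun i => (ℬ i).web)
      {s | s ⊆ (Tobj fun i => (ℬ i).web) ∧
        ∀ i, rimage (own i fun j => (ℬ j).web) s ∈ (ℬ i).fin}
      (Tmap f) := by
  have hTf := hT_sub _ _ f hf_sub
  have hlax := fun i => hown_lax i _ _ f hf_sub
  have hf_rev_sub : ∀ i, rrev (f i) ⊆ (ℬ i).web ×ˢ (𝒜 i).web :=
    fun i => rrev_subset_prod (hf_sub i)
  have hlax_rev := fun i => hT_sym f ▸ hown_lax i _ _ _ hf_rev_sub
  have hshp_lax_rev := hT_sym f ▸ hshp_lax _ _ _ hf_rev_sub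
  exact ⟨fun s hs => rimage_mem_ownedFin hTf hlax (fun i => (hf i).1) hs,
    fun b' hb' => rimage_rrev_mem_predual_ownedFin hTf (fun i => hown_sub i _) (hown_qf · _)
      (hshp_qf _) hlax hlax_rev hshp_lax_rev (hshp_fin _) hf hb'⟩

/-- A transport situation on a symmetric `I`-ary functor in Rel (given by its
action `Tobj` on families of sets and `Tmap` on families of relations), equipped
with an ownership relation `own` (a family of quasi-functional lax natural
transformations to the projections) and a shape relation `shp` (a
quasi-functional lax natural transformation to a constant functor `E_S` such
that subsets with finitely many shapes and finite ownership images are finite),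
defines a transport functor: the image `Tmap f` of any family of finitary
relations is finitary between the transported finiteness spaces. -/
theorem transport_situation_transport_functor
    {α β σ : Type*} {I : Type*}
    (Tobj : (I → Set α) → Set β)
    (Tmap : (I → Set (α × α)) → Set (β × β))
    (hT_sub : ∀ (A B : I → Set α) (f : I → Set (α × α)),
      (∀ i, f i ⊆ A i ×ˢ B i) → Tmap f ⊆ Tobj A ×ˢ Tobj B)
    (hT_id : ∀ A : I → Set α, Tmap (fun i => rid (A i)) = rid (Tobj A))
    (hT_comp : ∀ f g : I → Set (α × α),
      Tmap (fun i => rcomp (g i) (f i)) = rcomp (Tmap g) (Tmap f))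
    (hT_sym : ∀ f : I → Set (α × α), Tmap (fun i => rrev (f i)) = rrev (Tmap f))
    (own : I → (I → Set α) → Set (β × α))
    (hown_sub : ∀ i (A : I → Set α), own i A ⊆ Tobj A ×ˢ A i)
    (hown_qf : ∀ i (A : I → Set α) (x : β), (rimage (own i A) {x}).Finite)
    (hown_lax : ∀ i (A B : I → Set α) (g : I → Set (α × α)),
      (∀ j, g j ⊆ A j ×ˢ B j) →
      rcomp (own i B) (Tmap g) ⊆ rcomp (g i) (own i A))
    (S : Set σ)
    (shp : (I → Set α) → Set (β × σ))
    (hshp_sub : ∀ A : I → Set α, shp A ⊆ Tobj A ×ˢ S)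
    (hshp_qf : ∀ (A : I → Set α) (x : β), (rimage (shp A) {x}).Finite)
    (hshp_lax : ∀ (A B : I → Set α) (g : I → Set (α × α)),
      (∀ j, g j ⊆ A j ×ˢ B j) →
      rcomp (shp B) (Tmap g) ⊆ rcomp (rid S) (shp A))
    (hshp_fin : ∀ (A : I → Set α) (s : Set β), s ⊆ Tobj A →
      (rimage (shp A) s).Finite → (∀ i, (rimage (own i A) s).Finite) → s.Finite)
    (𝒜 ℬ : I → FinSpace α) (f : I → Set (α × α))
    (hf_sub : ∀ i, f i ⊆ (𝒜 i).web ×ˢ (ℬ i).web)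
    (hf : ∀ i, FinitaryRel (𝒜 i).web (𝒜 i).fin (ℬ i).web (ℬ i).fin (f i)) :
    FinitaryRel (Tobj fun i => (𝒜 i).web)
      {s | s ⊆ (Tobj fun i => (𝒜 i).web) ∧
        ∀ i, rimage (own i fun j => (𝒜 j).web) s ∈ (𝒜 i).fin}
      (Tobj fun i => (ℬ i).web)
      {s | s ⊆ (Tobj fun i => (ℬ i).web) ∧
        ∀ i, rimage (own i fun j => (ℬ j).web) s ∈ (ℬ i).fin}
      (Tmap f) :=
  transport_situation_transport_functor_general Tobj Tmap hT_sub hT_sym own hown_sub hown_qf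
    hown_lax S shp hshp_qf hshp_lax hshp_fin 𝒜 ℬ f hf_sub hf

end FinitenessPaper
end

section
/- The relational fixpoint operator is never finitary on non-empty webs: let 𝒜 be a finiteness space, set fix_0 = ∅ ⊆ M(M(|𝒜|) × |𝒜|) × |𝒜| and fix_{n+1} = {([([α_1,…,α_p], α)] + φ̄_1 + ⋯ + φ̄_p, α) : p ∈ ℕ, α, α_1, …, α_p ∈ |𝒜|, and (φ̄_k, α_k) ∈ fix_n for all 1 ≤ k ≤ p} (sums denoting multiset union), and fix = ⋃_{n∈ℕ} fix_n. If |𝒜| ≠ ∅, then fix ∉ F((𝒜 ⇒ 𝒜) ⇒ 𝒜). (In fact, for any α ∈ |𝒜|, the finitary multirelation f = {([], α), ([α], α)} ∈ F(𝒜 ⇒ 𝒜) satisfies: f^! ∩ fix⁻¹[{α}] is infinite.) -/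
open Set

namespace FinitenessPaper

/-- `a^! = M(a)`: the set of finite multisets all of whose elements lie in `a`. -/
def bangSet {α : Type*} (a : Set α) : Set (Multiset α) := {μ | ∀ x ∈ μ, x ∈ a}

/-- The finiteness structure of the exponential `!`, given by web and structure. -/
def bangFinS {α : Type*} (W : Set α) (F : Set (Set α)) : Set (Set (Multiset α)) :=
  {s | s ⊆ bangSet W ∧ (⋃ μ ∈ s, {x : α | x ∈ μ}) ∈ F}

/-- The finiteness structure of `𝒜 ⇒ ℬ = !𝒜 ⊸ ℬ = (!𝒜 ⊗ ℬ^⊥)^⊥`,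
given by webs and structures. -/
def impFinS {α β : Type*} (Wa : Set α) (Fa : Set (Set α)) (Wb : Set β)
    (Fb : Set (Set β)) : Set (Set (Multiset α × β)) :=
  predual (bangSet Wa ×ˢ Wb)
    (tensFin (bangSet Wa) (bangFinS Wa Fa) Wb (predual Wb Fb))

/-- The approximants of the relational fixpoint operator on `𝒜`:
`fix₀ = ∅` and `fixₙ₊₁ = {([([α₁,…,α_p], α)] + φ̄₁ + ⋯ + φ̄_p, α) : (φ̄ₖ, αₖ) ∈ fixₙ}`. -/
def fixN {α : Type*} (A : FinSpace α) : ℕ → Set (Multiset (Multiset α × α) × α)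
  | 0 => ∅
  | n + 1 =>
    {q | ∃ (a : α) (L : List (Multiset (Multiset α × α) × α)),
      a ∈ A.web ∧ (∀ p ∈ L, p ∈ fixN A n ∧ p.2 ∈ A.web) ∧
      q = (((((L.map Prod.snd : List α) : Multiset α), a) ::ₘ (L.map Prod.fst).sum), a)}

/-- The relational fixpoint operator `fix = ⋃ₙ fixₙ`. -/
def fixRel {α : Type*} (A : FinSpace α) : Set (Multiset (Multiset α × α) × α) :=
  ⋃ n, fixN A n

/-!
Fix `a ∈ |𝒜|` and the finite, hence finitary, multirelation `f = {([], a), ([a], a)}` of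
`𝒜 ⇒ 𝒜`. Unfolding `fix` `n + 1` times along `f` shows
`([([], a)] + n·[([a], a)], a) ∈ fix` for every `n`, so the fiber `f^! ∩ fix⁻¹[{a}]` is
infinite. But `f^! × {a}` is finitary in `!(𝒜 ⇒ 𝒜) ⊗ 𝒜^⊥`, and its intersection with `fix`
is that fiber times `{a}`, so `fix` cannot lie in the predual `F((𝒜 ⇒ 𝒜) ⇒ 𝒜)`.
-/

section General

variable {α β : Type*}

theorem mem_predual_of_finite_s18 {A : Set α} {F : Set (Set α)} {a' : Set α} (h : a' ⊆ A)
    (hfin : a'.Finite) : a' ∈ predual A F :=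
  ⟨h, fun _ _ => hfin.inter_of_right _⟩

theorem bangSet_mono {a b : Set α} (h : a ⊆ b) : bangSet a ⊆ bangSet b :=
  fun _ hμ x hx => h (hμ x hx)

theorem biUnion_bangSet (a : Set α) : (⋃ μ ∈ bangSet a, {x : α | x ∈ μ}) = a := by
  ext x
  simp only [mem_iUnion, mem_ofPred_eq, exists_prop]
  constructor
  · rintro ⟨μ, hμ, hx⟩
    exact hμ x hx
  · intro hx
    exact ⟨{x}, by simpa [bangSet] using hx, Multiset.mem_singleton_self x⟩

theorem bangSet_mem_bangFinS {W a : Set α} {F : Set (Set α)} (hW : a ⊆ W) (hF : a ∈ F) :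
    bangSet a ∈ bangFinS W F :=
  ⟨bangSet_mono hW, (biUnion_bangSet a).symm ▸ hF⟩

theorem prod_singleton_inter_eq (s : Set α) (b : β) (R : Set (α × β)) :
    s ×ˢ {b} ∩ R = (s ∩ rimage (rrev R) {b}) ×ˢ {b} := by
  ext ⟨x, y⟩
  simp only [mem_inter_iff, mem_prod, mem_singleton_iff, rimage, rrev, mem_ofPred_eq,
    exists_eq_left]
  constructor
  · rintro ⟨⟨hx, rfl⟩, hR⟩
    exact ⟨⟨hx, hR⟩, rfl⟩
  · rintro ⟨⟨hx, hR⟩, rfl⟩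
    exact ⟨⟨hx, rfl⟩, hR⟩

theorem notMem_impFinS_of_infinite_fiber {Wa : Set α} {Fa : Set (Set α)} {Wb : Set β}
    {Fb : Set (Set β)} {R : Set (Multiset α × β)} {s : Set (Multiset α)} {b : β}
    (hs : s ∈ bangFinS Wa Fa) (hb : b ∈ Wb) (hinf : (s ∩ rimage (rrev R) {b}).Infinite) :
    R ∉ impFinS Wa Fa Wb Fb := by
  rintro ⟨-, hR⟩
  have hne : s.Nonempty := hinf.nonempty.mono inter_subset_left
  have htens : s ×ˢ {b} ∈ tensFin (bangSet Wa) (bangFinS Wa Fa) Wb (predual Wb Fb) := by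
    refine ⟨prod_mono hs.1 (singleton_subset_iff.2 hb), ?_, ?_⟩
    · rwa [fst_image_prod _ (singleton_nonempty b)]
    · rw [snd_image_prod hne]
      exact mem_predual_of_finite_s18 (singleton_subset_iff.2 hb) (finite_singleton b)
  have hfin := hR _ htens
  rw [prod_singleton_inter_eq] at hfin
  exact hinf.prod_left (singleton_nonempty b) hfin

end General

section Witness

variable {α : Type*}

def constOrId (a : α) : Set (Multiset α × α) := {((0 : Multiset α), a), (({a} : Multiset α), a)}

theorem constOrId_subset {W : Set α} {a : α} (ha : a ∈ W) :
    constOrId a ⊆ bangSet W ×ˢ W := by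
  rintro x (rfl | rfl)
  · exact ⟨fun y hy => absurd hy (Multiset.notMem_zero y), ha⟩
  · exact ⟨fun y hy => Multiset.mem_singleton.1 hy ▸ ha, ha⟩

/-- The points of `constOrId a` used by `n + 1` unfoldings of `fix`. -/
def fixWitness (a : α) (n : ℕ) : Multiset (Multiset α × α) :=
  ((0 : Multiset α), a) ::ₘ Multiset.replicate n (({a} : Multiset α), a)

theorem fixWitness_injective (a : α) : Function.Injective (fixWitness a) := by
  intro m n h
  simpa [fixWitness] using congrArg Multiset.card h

theorem fixWitness_mem_bangSet (a : α) (n : ℕ) : fixWitness a n ∈ bangSet (constOrId a) := by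
  intro x hx
  rcases Multiset.mem_cons.1 hx with h | h
  · exact Or.inl h
  · exact Or.inr (Multiset.eq_of_mem_replicate h)

theorem fixWitness_mem_fixN (A : FinSpace α) {a : α} (ha : a ∈ A.web) (n : ℕ) :
    (fixWitness a n, a) ∈ fixN A (n + 1) := by
  induction n with
  | zero => exact ⟨a, [], ha, by simp, by simp [fixWitness]⟩
  | succ n ih =>
    refine ⟨a, [(fixWitness a n, a)], ha, ?_, ?_⟩
    · rintro p hp
      rw [List.mem_singleton.1 hp]
      exact ⟨ih, ha⟩
    · simp [fixWitness, Multiset.replicate_succ, Multiset.cons_swap]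

theorem fixWitness_mem_fixRel (A : FinSpace α) {a : α} (ha : a ∈ A.web) (n : ℕ) :
    (fixWitness a n, a) ∈ fixRel A :=
  mem_iUnion.2 ⟨n + 1, fixWitness_mem_fixN A ha n⟩

theorem infinite_bangSet_constOrId_inter_fiber (A : FinSpace α) {a : α} (ha : a ∈ A.web) :
    (bangSet (constOrId a) ∩ rimage (rrev (fixRel A)) {a}).Infinite :=
  infinite_of_injective_forall_mem (fixWitness_injective a) fun n =>
    ⟨fixWitness_mem_bangSet a n, a, rfl, fixWitness_mem_fixRel A ha n⟩

end Witness

/-- The relational fixpoint operator is never finitary on non-empty webs: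
if `|𝒜| ≠ ∅` then `fix ∉ F((𝒜 ⇒ 𝒜) ⇒ 𝒜)`; indeed for any `α ∈ |𝒜|` the finitary
multirelation `f = {([], α), ([α], α)} ∈ F(𝒜 ⇒ 𝒜)` satisfies that
`f^! ∩ fix⁻¹[{α}]` is infinite. -/
theorem fix_not_finitary {α : Type*} (A : FinSpace α) (hA : A.web.Nonempty) :
    fixRel A ∉
      impFinS (bangSet A.web ×ˢ A.web) (impFinS A.web A.fin A.web A.fin)
        A.web A.fin ∧
    ∀ a ∈ A.web,
      ({((0 : Multiset α), a), (({a} : Multiset α), a)} : Set (Multiset α × α))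
          ∈ impFinS A.web A.fin A.web A.fin ∧
      (bangSet ({((0 : Multiset α), a), (({a} : Multiset α), a)} : Set (Multiset α × α))
        ∩ rimage (rrev (fixRel A)) {a}).Infinite := by
  have hfinitary : ∀ a ∈ A.web, constOrId a ∈ impFinS A.web A.fin A.web A.fin :=
    fun a ha => mem_predual_of_finite_s18 (constOrId_subset ha) ((finite_singleton _).insert _)
  obtain ⟨a, ha⟩ := hA
  refine ⟨?_, fun b hb => ⟨hfinitary b hb, infinite_bangSet_constOrId_inter_fiber A hb⟩⟩
  exact notMem_impFinS_of_infinite_fiber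
    (bangSet_mem_bangFinS (constOrId_subset ha) (hfinitary a ha)) ha
    (infinite_bangSet_constOrId_inter_fiber A ha)

end FinitenessPaper
end
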